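/- arXiv:1505.02824 — 3 statements merged into one kernel-verified Lean document; each statement's English description precedes it below -/
import Mathlib

section
/- Let q be a prime power, d ≥ 1, m ≥ 1, and let X_1, …, X_m be pairwise disjoint subsets of F_q^d whose union is F_q^d. Call a tuple (A, B_1, …, B_m) of subsets of F_q^d × F_q consistent if A, B_1, …, B_m are pairwise disjoint with union F_q^d × F_q, the complement of A is a transversal hyperplane T(a,b), and for every k the shifted projection satisfies π[B_k] + a = X_k (where π[B_k] + a = {π(w) + a : w ∈ B_k}). Then the map sending a pair (a,b) ∈ F_q^d × F_q to the tuple with A = (F_q^d × F_q) ∖ T(a,b) and B_k = {(y − a, a·(y − a) + b) : y ∈ X_k} is a bijection onto the set of consistent tuples; in particular the number of consistent tuples is exactly q^{d+1}. -/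
set_option autoImplicit false

/-- The transversal hyperplane `T(a,b)`: the graph of `x ↦ a·x + b`
inside `F_q^d × F_q`. -/
def Thyp {F : Type} [Field F] {d : ℕ} (a : Fin d → F) (b : F) :
    Set ((Fin d → F) × F) :=
  {p | p.2 = (∑ i, a i * p.1 i) + b}

/-- A tuple `(A, B_1, …, B_m)` of subsets of `F_q^d × F_q` is *consistent*
(with the announcements `X_1, …, X_m`) if its sets are pairwise disjoint with
union everything, the complement of `A` is a transversal hyperplane `T(a,b)`,
and the shifted projection of each `B_k` is `X_k`, i.e. `π[B_k] + a = X_k`. -/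
def Consistent {F : Type} [Field F] {d m : ℕ} (X : Fin m → Set (Fin d → F))
    (t : Set ((Fin d → F) × F) × (Fin m → Set ((Fin d → F) × F))) : Prop :=
  (∀ k, Disjoint t.1 (t.2 k)) ∧
  (Pairwise fun j k => Disjoint (t.2 j) (t.2 k)) ∧
  (t.1 ∪ (⋃ k, t.2 k)) = Set.univ ∧
  ∃ a b, t.1ᶜ = Thyp a b ∧
    ∀ k, (fun w : (Fin d → F) × F => w.1 + a) '' (t.2 k) = X k

/-!
A consistent tuple is determined by its hyperplane `T(a,b)`: `A` is its complement, and since the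
shifted projection `w ↦ π(w) + a` is a bijection from `T(a,b)` onto `F_q^d`, inverted by
`y ↦ (y - a, a·(y - a) + b)`, each `B_k ⊆ T(a,b)` must be the lift of `X_k`. Conversely the
lifts of a partition of `F_q^d` partition `T(a,b)`. A hyperplane determines `(a,b)`, so consistent
tuples correspond to the `q^(d+1)` pairs `(a,b)`.
-/

section Transversal

variable {F : Type} [Field F] {d m : ℕ}

theorem mem_Thyp {a : Fin d → F} {b : F} {p : (Fin d → F) × F} :
    p ∈ Thyp a b ↔ p.2 = (∑ i, a i * p.1 i) + b :=
  Iff.rfl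

theorem Thyp_injective : Function.Injective fun ab : (Fin d → F) × F => Thyp ab.1 ab.2 := by
  rintro ⟨a, b⟩ ⟨a', b'⟩ h
  have graph (x : Fin d → F) : a ⬝ᵥ x + b = a' ⬝ᵥ x + b' :=
    show (x, a ⬝ᵥ x + b) ∈ Thyp a' b' from (show Thyp a b = Thyp a' b' from h) ▸ rfl
  have hb : b = b' := by simpa using graph 0
  refine Prod.ext (funext fun i => ?_) hb
  simpa [dotProduct_single, hb] using graph (Pi.single i 1)

theorem eq_of_mem_Thyp_of_fst_eq {a : Fin d → F} {b : F} {v w : (Fin d → F) × F}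
    (hv : v ∈ Thyp a b) (hw : w ∈ Thyp a b) (h : v.1 = w.1) : v = w :=
  Prod.ext h (by rw [mem_Thyp.mp hv, mem_Thyp.mp hw, h])

def liftThyp (a : Fin d → F) (b : F) (y : Fin d → F) : (Fin d → F) × F :=
  (y - a, (∑ i, a i * (y - a) i) + b)

theorem image_liftThyp (a : Fin d → F) (b : F) (S : Set (Fin d → F)) :
    liftThyp a b '' S = Thyp a b ∩ {w | w.1 + a ∈ S} := by
  ext w
  constructor
  · rintro ⟨y, hy, rfl⟩
    exact ⟨rfl, by simpa [liftThyp] using hy⟩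
  · rintro ⟨hw, hy⟩
    refine ⟨w.1 + a, hy, eq_of_mem_Thyp_of_fst_eq rfl hw ?_⟩
    simp [liftThyp]

theorem shift_image_liftThyp (a : Fin d → F) (b : F) (S : Set (Fin d → F)) :
    (fun w : (Fin d → F) × F => w.1 + a) '' (liftThyp a b '' S) = S := by
  simp [Set.image_image, liftThyp]

theorem Thyp_inter_shift_preimage_image {a : Fin d → F} {b : F} {B : Set ((Fin d → F) × F)}
    (hB : B ⊆ Thyp a b) :
    Thyp a b ∩ {w | w.1 + a ∈ (fun w : (Fin d → F) × F => w.1 + a) '' B} = B := by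
  refine Set.Subset.antisymm ?_ fun w hw => ⟨hB hw, w, hw, rfl⟩
  rintro w ⟨hw, v, hv, hvw⟩
  rwa [← eq_of_mem_Thyp_of_fst_eq (hB hv) hw (add_right_cancel hvw)]

def consistentTuple (X : Fin m → Set (Fin d → F)) (ab : (Fin d → F) × F) :
    Set ((Fin d → F) × F) × (Fin m → Set ((Fin d → F) × F)) :=
  ((Thyp ab.1 ab.2)ᶜ, fun k => liftThyp ab.1 ab.2 '' X k)

theorem consistent_consistentTuple {X : Fin m → Set (Fin d → F)}
    (hXdisj : Pairwise fun j k => Disjoint (X j) (X k)) (hXcov : (⋃ k, X k) = Set.univ)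
    (ab : (Fin d → F) × F) : Consistent X (consistentTuple X ab) := by
  obtain ⟨a, b⟩ := ab
  simp only [Consistent, consistentTuple, image_liftThyp]
  refine ⟨fun k => ?_, fun j k hjk => ?_, ?_, a, b, compl_compl _, fun k => ?_⟩
  · exact disjoint_compl_left.mono_right Set.inter_subset_left
  · exact Set.disjoint_left.mpr fun w hj hk => Set.disjoint_left.mp (hXdisj hjk) hj.2 hk.2
  · have hcov : (⋃ k, {w : (Fin d → F) × F | w.1 + a ∈ X k}) = Set.univ :=
      Set.eq_univ_of_forall fun w => by
        simpa using (hXcov ▸ Set.mem_univ (w.1 + a) : w.1 + a ∈ ⋃ k, X k)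
    rw [← Set.inter_iUnion, hcov, Set.inter_univ, Set.compl_union_self]
  · rw [← image_liftThyp, shift_image_liftThyp]

theorem consistentTuple_injective (X : Fin m → Set (Fin d → F)) :
    Function.Injective (consistentTuple X) := fun _ _ h =>
  Thyp_injective (compl_injective (congrArg Prod.fst h))

theorem exists_consistentTuple_eq {X : Fin m → Set (Fin d → F)}
    {t : Set ((Fin d → F) × F) × (Fin m → Set ((Fin d → F) × F))} (ht : Consistent X t) :
    ∃ ab, consistentTuple X ab = t := by
  obtain ⟨A, B⟩ := t
  obtain ⟨hAB, -, -, a, b, hA, hX⟩ := ht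
  have hB (k : Fin m) : B k ⊆ Thyp a b := hA ▸ (hAB k).subset_compl_left
  refine ⟨(a, b), Prod.ext (compl_eq_comm.mp hA) (funext fun k => ?_)⟩
  simp only [consistentTuple, image_liftThyp, ← hX k]
  exact Thyp_inter_shift_preimage_image (hB k)

theorem bijOn_consistentTuple {X : Fin m → Set (Fin d → F)}
    (hXdisj : Pairwise fun j k => Disjoint (X j) (X k)) (hXcov : (⋃ k, X k) = Set.univ) :
    Set.BijOn (consistentTuple X) Set.univ {t | Consistent X t} :=
  ⟨fun ab _ => consistent_consistentTuple hXdisj hXcov ab,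
    (consistentTuple_injective X).injOn,
    fun _ ht => (exists_consistentTuple_eq ht).imp fun _ h => ⟨Set.mem_univ _, h⟩⟩

end Transversal

theorem consistent_tuples_bijection_general (q d m : ℕ)
    (F : Type) [Field F] [Fintype F] (hF : Fintype.card F = q)
    (X : Fin m → Set (Fin d → F))
    (hXdisj : Pairwise fun j k => Disjoint (X j) (X k))
    (hXcov : (⋃ k, X k) = Set.univ) :
    Set.BijOn
      (fun ab : (Fin d → F) × F =>
        (((Thyp ab.1 ab.2)ᶜ : Set ((Fin d → F) × F)),
          fun k => (fun y : Fin d → F =>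
            ((y - ab.1, (∑ i, ab.1 i * (y - ab.1) i) + ab.2) : (Fin d → F) × F)) '' X k))
      Set.univ {t | Consistent X t} ∧
    {t : Set ((Fin d → F) × F) × (Fin m → Set ((Fin d → F) × F)) |
        Consistent X t}.ncard = q ^ (d + 1) := by
  have hbij := bijOn_consistentTuple hXdisj hXcov
  refine ⟨hbij, ?_⟩
  rw [← hbij.image_eq, Set.ncard_image_of_injective _ (consistentTuple_injective X),
    Set.ncard_univ, Nat.card_eq_fintype_card, Fintype.card_prod, Fintype.card_fun, hF,
    Fintype.card_fin, pow_succ]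

/-- The map sending `(a,b)` to the tuple `(A, B_1, …, B_m)` with
`A = (T(a,b))ᶜ` and `B_k = μ_{T(a,b)}[X_k]` is a bijection from `F_q^d × F_q`
onto the set of consistent tuples; in particular there are exactly `q^(d+1)`
consistent tuples. -/
theorem consistent_tuples_bijection (q d m : ℕ) (hq : IsPrimePow q) (hd : 1 ≤ d) (hm : 1 ≤ m)
    (F : Type) [Field F] [Fintype F] (hF : Fintype.card F = q)
    (X : Fin m → Set (Fin d → F))
    (hXdisj : Pairwise fun j k => Disjoint (X j) (X k))
    (hXcov : (⋃ k, X k) = Set.univ) :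
    Set.BijOn
      (fun ab : (Fin d → F) × F =>
        (((Thyp ab.1 ab.2)ᶜ : Set ((Fin d → F) × F)),
          fun k => (fun y : Fin d → F =>
            ((y - ab.1, (∑ i, ab.1 i * (y - ab.1) i) + ab.2) : (Fin d → F) × F)) '' X k))
      Set.univ {t | Consistent X t} ∧
    {t : Set ((Fin d → F) × F) × (Fin m → Set ((Fin d → F) × F)) |
        Consistent X t}.ncard = q ^ (d + 1) :=
  consistent_tuples_bijection_general q d m F hF X hXdisj hXcov
end

section
/- Let q be a prime power, d ≥ 1, m ≥ 1, let X_1, …, X_m be pairwise disjoint subsets of F_q^d whose union is F_q^d, let c ∈ F_q^d × F_q, and fix k ∈ {1, …, m}. Among the q^{d+1} consistent tuples (A, B_1, …, B_m) (i.e., tuples of pairwise disjoint sets with union F_q^d × F_q such that the complement of A is a transversal hyperplane T(a,b) and π[B_j] + a = X_j for all j), the number of tuples in which c ∈ B_k is exactly |X_k|. -/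
set_option autoImplicit false

lemma Thyp_inj {F : Type} [Field F] {d : ℕ} {a a' : Fin d → F} {b b' : F}
    (h : Thyp a b = Thyp a' b') : a = a' ∧ b = b' := by
  have hb : b = b' := by
    have h0 : ((0 : Fin d → F), b) ∈ Thyp a b := by simp [Thyp]
    rw [h] at h0
    simpa [Thyp] using h0
  refine ⟨funext fun i => ?_, hb⟩
  have h1 : ((Pi.single i 1 : Fin d → F), a i + b) ∈ Thyp a b := by
    simp [Thyp, Pi.single_apply, mul_ite, Finset.sum_ite_eq']
  rw [h] at h1
  have h2 : a i + b = a' i + b' := by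
    simpa [Thyp, Pi.single_apply, mul_ite, Finset.sum_ite_eq'] using h1
  rw [hb] at h2
  exact add_right_cancel h2

/-- the tuple associated to `(a,b)` -/
def tup {F : Type} [Field F] {d m : ℕ} (X : Fin m → Set (Fin d → F))
    (a : Fin d → F) (b : F) :
    Set ((Fin d → F) × F) × (Fin m → Set ((Fin d → F) × F)) :=
  ((Thyp a b)ᶜ, fun j => {w | w ∈ Thyp a b ∧ w.1 + a ∈ X j})

lemma tup_consistent {F : Type} [Field F] {d m : ℕ} {X : Fin m → Set (Fin d → F)}
    (hXdisj : Pairwise fun j k => Disjoint (X j) (X k))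
    (hXcov : (⋃ k, X k) = Set.univ) (a : Fin d → F) (b : F) :
    Consistent X (tup X a b) := by
  refine ⟨fun j => ?_, fun j j' hjj' => ?_, ?_, a, b, by simp [tup], fun j => ?_⟩
  · rw [Set.disjoint_left]
    rintro w hw ⟨hw1, -⟩
    exact hw hw1
  · show Disjoint _ _
    rw [Set.disjoint_left]
    rintro w ⟨-, hw1⟩ ⟨-, hw2⟩
    exact Set.disjoint_left.1 (hXdisj hjj') hw1 hw2
  · ext w
    simp only [tup, Set.mem_union, Set.mem_iUnion, Set.mem_compl_iff, Set.mem_univ, iff_true,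
      Set.mem_setOf_eq]
    by_cases hw : w ∈ Thyp a b
    · right
      have : w.1 + a ∈ ⋃ j, X j := hXcov ▸ Set.mem_univ _
      obtain ⟨j, hj⟩ := Set.mem_iUnion.1 this
      exact ⟨j, hw, hj⟩
    · exact Or.inl hw
  · ext y
    constructor
    · rintro ⟨w, ⟨-, hw⟩, rfl⟩
      exact hw
    · intro hy
      refine ⟨(y - a, (∑ i, a i * (y - a) i) + b), ⟨rfl, ?_⟩, ?_⟩
      · simpa using hy
      · simp

/-- Among the consistent tuples `(A, B_1, …, B_m)`, exactly `|X_k|` have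
`c ∈ B_k`. -/
theorem card_consistent_with_card_in_B (q d m : ℕ) (hq : IsPrimePow q) (hd : 1 ≤ d) (hm : 1 ≤ m)
    (F : Type) [Field F] [Fintype F] (hF : Fintype.card F = q)
    (X : Fin m → Set (Fin d → F))
    (hXdisj : Pairwise fun j k => Disjoint (X j) (X k))
    (hXcov : (⋃ k, X k) = Set.univ)
    (c : (Fin d → F) × F) (k : Fin m) :
    {t : Set ((Fin d → F) × F) × (Fin m → Set ((Fin d → F) × F)) |
        Consistent X t ∧ c ∈ t.2 k}.ncard = (X k).ncard := by
  set f : (Fin d → F) → Set ((Fin d → F) × F) × (Fin m → Set ((Fin d → F) × F)) :=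
    fun x => tup X (x - c.1) (c.2 - ∑ i, (x - c.1) i * c.1 i) with hf
  have himg : {t : Set ((Fin d → F) × F) × (Fin m → Set ((Fin d → F) × F)) |
      Consistent X t ∧ c ∈ t.2 k} = f '' (X k) := by
    ext t
    simp only [Set.mem_setOf_eq, Set.mem_image]
    constructor
    · rintro ⟨⟨hdisj, hpair, hcov, a, b, hcompl, himgs⟩, hc⟩
      refine ⟨c.1 + a, ?_, ?_⟩
      · rw [← himgs k]; exact ⟨c, hc, rfl⟩
      · -- f (c.1 + a) = t
        have ha : c.1 + a - c.1 = a := by ring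
        have hcT : c ∈ Thyp a b := by
          rw [← hcompl]
          exact fun hc1 => Set.disjoint_left.1 (hdisj k) hc1 hc
        have hb : c.2 - ∑ i, a i * c.1 i = b := by
          have := hcT
          simp only [Thyp, Set.mem_setOf_eq] at this
          rw [this]; ring
        rw [hf]
        simp only [ha, hb]
        have ht1 : t.1 = (Thyp a b)ᶜ := by rw [← hcompl, compl_compl]
        have ht2 : ∀ j, t.2 j = {w | w ∈ Thyp a b ∧ w.1 + a ∈ X j} := by
          intro j
          ext w
          constructor
          · intro hw
            refine ⟨?_, ?_⟩
            · rw [← hcompl]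
              exact fun hw1 => Set.disjoint_left.1 (hdisj j) hw1 hw
            · rw [← himgs j]; exact ⟨w, hw, rfl⟩
          · rintro ⟨hwT, hwX⟩
            have hwnt1 : w ∉ t.1 := by rw [← Set.mem_compl_iff, hcompl]; exact hwT
            have : w ∈ t.1 ∪ ⋃ j', t.2 j' := hcov ▸ Set.mem_univ _
            rcases this with h | h
            · exact absurd h hwnt1
            · obtain ⟨j', hj'⟩ := Set.mem_iUnion.1 h
              rcases eq_or_ne j' j with rfl | hne
              · exact hj'
              · exfalso
                have : w.1 + a ∈ X j' := by rw [← himgs j']; exact ⟨w, hj', rfl⟩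
                exact Set.disjoint_left.1 (hXdisj hne) this hwX
        have : t = (t.1, t.2) := rfl
        rw [this, ht1]
        simp only [tup]
        congr 1
        funext j
        exact (ht2 j).symm
    · rintro ⟨x, hx, rfl⟩
      refine ⟨tup_consistent hXdisj hXcov _ _, ?_, ?_⟩
      · show c ∈ Thyp _ _
        simp only [Thyp, Set.mem_setOf_eq]
        ring
      · show c.1 + (x - c.1) ∈ X k
        simpa using hx
  rw [himg]
  apply Set.ncard_image_of_injOn
  intro x hx y hy hxy
  rw [hf] at hxy
  simp only [tup, Prod.mk.injEq] at hxy
  have := Thyp_inj (compl_injective hxy.1)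
  have hax : x - c.1 = y - c.1 := this.1
  have : x = y := by
    have := congrArg (· + c.1) hax
    simpa using this
  exact this
end

section
/- Informativity of the shifted projection protocol (concrete form). Let q be a prime power, d ≥ 1, m ≥ 1. Suppose (A, B_1, …, B_m) and (A', B'_1, …, B'_m) are each tuples of pairwise disjoint subsets of F_q^d × F_q with union F_q^d × F_q, such that the complement of A is a transversal hyperplane T(a,b), the complement of A' is a transversal hyperplane T(a',b'), |B_k| > q^{d−1} for every k, and the announcements agree: π[B_k] + a = π[B'_k] + a' for every k. If moreover the two tuples agree in one coordinate (either A = A', or B_j = B'_j for some j), then the tuples are equal: A = A' and B_k = B'_k for every k. -/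
set_option autoImplicit false

lemma card_hyp_le (F : Type) [Field F] [Fintype F] (d : ℕ)
    (c : Fin d → F) (i₀ : Fin d) (hc : c i₀ ≠ 0) (t : F) :
    {x : Fin d → F | ∑ i, c i * x i = t}.ncard ≤ Fintype.card F ^ (d - 1) := by
  classical
  set H : Set (Fin d → F) := {x | ∑ i, c i * x i = t} with hH
  set g : (Fin d → F) → ({j : Fin d // j ≠ i₀} → F) := fun x j => x j.1 with hg
  have hinj : Set.InjOn g H := by
    intro x hx y hy hxy
    have hx' : ∑ i, c i * x i = t := hx
    have hy' : ∑ i, c i * y i = t := hy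
    have hkey : ∀ j, j ≠ i₀ → x j = y j := fun j hj => congrFun hxy ⟨j, hj⟩
    have hsum : ∑ i, (c i * x i - c i * y i) = 0 := by
      rw [Finset.sum_sub_distrib, hx', hy', sub_self]
    have hsingle : ∑ i, (c i * x i - c i * y i) = c i₀ * x i₀ - c i₀ * y i₀ := by
      apply Finset.sum_eq_single
      · intro i _ hi
        rw [hkey i hi, sub_self]
      · intro h; exact absurd (Finset.mem_univ i₀) h
    have : c i₀ * x i₀ = c i₀ * y i₀ := sub_eq_zero.mp (hsingle ▸ hsum)
    have hxy0 : x i₀ = y i₀ := mul_left_cancel₀ hc this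
    funext j
    by_cases h : j = i₀
    · rw [h]; exact hxy0
    · exact hkey j h
  calc H.ncard = (g '' H).ncard := (Set.ncard_image_of_injOn hinj).symm
    _ ≤ (Set.univ : Set ({j : Fin d // j ≠ i₀} → F)).ncard :=
        Set.ncard_le_ncard (Set.subset_univ _) Set.finite_univ
    _ = Fintype.card ({j : Fin d // j ≠ i₀} → F) := by
        rw [Set.ncard_univ, Nat.card_eq_fintype_card]
    _ = Fintype.card F ^ (d - 1) := by
        rw [Fintype.card_fun]
        congr 1
        have : Fintype.card {j : Fin d // j ≠ i₀} = Fintype.card (Fin d) - 1 := by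
          simpa using Fintype.card_subtype_compl (fun j : Fin d => j = i₀)
        simpa using this

lemma graph_subset {F : Type} [Field F] {d : ℕ} (a : Fin d → F) (b : F)
    (Bk B'k : Set ((Fin d → F) × F))
    (h1 : Bk ⊆ Thyp a b) (h2 : B'k ⊆ Thyp a b)
    (him : (fun w : (Fin d → F) × F => w.1 + a) '' Bk
         ⊆ (fun w : (Fin d → F) × F => w.1 + a) '' B'k) :
    Bk ⊆ B'k := by
  intro w hw
  obtain ⟨v, hv, hva⟩ := him ⟨w, hw, rfl⟩
  have h1' : v.1 = w.1 := by
    have := add_right_cancel hva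
    exact this
  have hw2 : w.2 = (∑ i, a i * w.1 i) + b := h1 hw
  have hv2 : v.2 = (∑ i, a i * v.1 i) + b := h2 hv
  have : w = v := by
    apply Prod.ext
    · exact h1'.symm
    · rw [hw2, hv2, h1']
  rw [this]; exact hv

/-- Informativity of the shifted projection protocol: two tuples
`(A, B_1, …, B_m)` and `(A', B'_1, …, B'_m)` that each partition
`F_q^d × F_q`, whose first components have transversal-hyperplane complements
`T(a,b)` resp. `T(a',b')`, with `|B_k|, |B'_k| > q^(d-1)`, and which produce
the same announcements `π[B_k] + a = π[B'_k] + a'`, must be equal as soon as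
they agree in one coordinate. -/
theorem shifted_projection_informative (q d m : ℕ)
    (hq : IsPrimePow q) (hd : 1 ≤ d) (hm : 1 ≤ m)
    (F : Type) [Field F] [Fintype F] (hF : Fintype.card F = q)
    (A A' : Set ((Fin d → F) × F)) (B B' : Fin m → Set ((Fin d → F) × F))
    (a a' : Fin d → F) (b b' : F)
    (hA : Aᶜ = Thyp a b) (hA' : A'ᶜ = Thyp a' b')
    (hdisj : ∀ k, Disjoint A (B k)) (hdisj' : ∀ k, Disjoint A' (B' k))
    (hpair : Pairwise fun j k => Disjoint (B j) (B k))
    (hpair' : Pairwise fun j k => Disjoint (B' j) (B' k))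
    (hcov : (A ∪ (⋃ k, B k)) = Set.univ) (hcov' : (A' ∪ (⋃ k, B' k)) = Set.univ)
    (hsize : ∀ k, q ^ (d - 1) < (B k).ncard)
    (hsize' : ∀ k, q ^ (d - 1) < (B' k).ncard)
    (hann : ∀ k, (fun w : (Fin d → F) × F => w.1 + a) '' B k
              = (fun w : (Fin d → F) × F => w.1 + a') '' B' k)
    (hagree : A = A' ∨ ∃ j, B j = B' j) :
    A = A' ∧ ∀ k, B k = B' k := by
  classical
  have hBsub : ∀ k, B k ⊆ Thyp a b := by
    intro k w hw
    rw [← hA]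
    intro hwA
    exact Set.disjoint_left.mp (hdisj k) hwA hw
  have hB'sub : ∀ k, B' k ⊆ Thyp a' b' := by
    intro k w hw
    rw [← hA']
    intro hwA
    exact Set.disjoint_left.mp (hdisj' k) hwA hw
  -- Step 1: a = a' and b = b'
  have hab : a = a' ∧ b = b' := by
    rcases hagree with h | ⟨j, hj⟩
    · have hT : Thyp a b = Thyp a' b' := by rw [← hA, ← hA', h]
      have hb : b = b' := by
        have h0 : ((0 : Fin d → F), b) ∈ Thyp a b := by simp [Thyp]
        have h0' := hT ▸ h0
        simpa [Thyp] using h0'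
      have ha : a = a' := by
        funext i
        have h1 : ((Pi.single i 1 : Fin d → F), a i + b) ∈ Thyp a b := by
          simp [Thyp, Pi.single_apply, Finset.sum_ite_eq']
        have h1' := hT ▸ h1
        have : a i + b = a' i + b' := by
          simpa [Thyp, Pi.single_apply, Finset.sum_ite_eq'] using h1'
        rw [hb] at this
        exact add_right_cancel this
      exact ⟨ha, hb⟩
    · -- B j = B' j ⊆ both hyperplanes
      have hsub1 : B j ⊆ Thyp a b := hBsub j
      have hsub2 : B j ⊆ Thyp a' b' := hj ▸ hB'sub j
      have hne : (B j).Nonempty := by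
        have := hsize j
        have : (B j).ncard ≠ 0 := by omega
        exact Set.nonempty_of_ncard_ne_zero this
      have ha : a = a' := by
        by_contra hne'
        obtain ⟨i₀, hi₀⟩ : ∃ i, a i ≠ a' i := by
          by_contra h
          push_neg at h
          exact hne' (funext h)
        -- B j projects into a hyperplane in F^d
        have hproj : (Prod.fst '' B j) ⊆
            {x : Fin d → F | ∑ i, (a i - a' i) * x i = b' - b} := by
          rintro x ⟨w, hw, rfl⟩
          have h1 : w.2 = (∑ i, a i * w.1 i) + b := hsub1 hw
          have h2 : w.2 = (∑ i, a' i * w.1 i) + b' := hsub2 hw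
          have : (∑ i, a i * w.1 i) + b = (∑ i, a' i * w.1 i) + b' := by
            rw [← h1, ← h2]
          simp only [Set.mem_setOf_eq, sub_mul, Finset.sum_sub_distrib]
          linear_combination this
        have hinjfst : Set.InjOn Prod.fst (B j) := by
          intro w hw v hv hwv
          have h1 : w.2 = (∑ i, a i * w.1 i) + b := hsub1 hw
          have h2 : v.2 = (∑ i, a i * v.1 i) + b := hsub1 hv
          apply Prod.ext hwv
          rw [h1, h2, hwv]
        have hcard : (B j).ncard ≤ Fintype.card F ^ (d - 1) := by
          calc (B j).ncard = (Prod.fst '' B j).ncard :=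
                (Set.ncard_image_of_injOn hinjfst).symm
            _ ≤ {x : Fin d → F | ∑ i, (a i - a' i) * x i = b' - b}.ncard :=
                Set.ncard_le_ncard hproj (Set.toFinite _)
            _ ≤ Fintype.card F ^ (d - 1) :=
                card_hyp_le F d (fun i => a i - a' i) i₀ (sub_ne_zero.mpr hi₀) (b' - b)
        rw [hF] at hcard
        exact absurd hcard (not_le.mpr (hsize j))
      have hb : b = b' := by
        obtain ⟨w, hw⟩ := hne
        have h1 : w.2 = (∑ i, a i * w.1 i) + b := hsub1 hw
        have h2 : w.2 = (∑ i, a' i * w.1 i) + b' := hsub2 hw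
        rw [← ha] at h2
        have := h1.symm.trans h2
        exact add_left_cancel this
      exact ⟨ha, hb⟩
  obtain ⟨ha, hb⟩ := hab
  subst ha; subst hb
  have hAeq : A = A' := by
    have : Aᶜ = A'ᶜ := hA.trans hA'.symm
    exact compl_injective this
  refine ⟨hAeq, fun k => ?_⟩
  apply Set.Subset.antisymm
  · exact graph_subset a b (B k) (B' k) (hBsub k) (hB'sub k) (le_of_eq (hann k))
  · exact graph_subset a b (B' k) (B k) (hB'sub k) (hBsub k) (le_of_eq (hann k).symm)
end
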